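/- arXiv:1803.02461 — 6 statements merged into one kernel-verified Lean document; each statement's English description precedes it below -/
import Mathlib

section
/- Suppose g is ρ-weakly convex (every weak subgradient satisfies the defining inequality below), μ-sharp on 𝒳, and 𝒳* is nonempty. If a point x ∈ 𝒳 is stationary for the problem min_{𝒳} g in the sense that 0 is a weak subgradient of g + δ_𝒳 at x, i.e. g(y) ≥ g(x) − (ρ/2)‖y − x‖² for all y ∈ 𝒳, and x ∉ 𝒳*, then dist(x, 𝒳*) ≥ 2μ/ρ. Equivalently, the problem min_{𝒳} g has no stationary points x with 0 < dist(x, 𝒳*) < 2μ/ρ. -/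
open scoped InnerProductSpace

/-!
A stationary point `x` satisfies `g x - g* ≤ (ρ/2)‖z - x‖²` for every minimizer `z`, hence
`g x - g* ≤ (ρ/2) dist(x, 𝒳*)²`, while sharpness gives `μ dist(x, 𝒳*) ≤ g x - g*`.
Dividing by `dist(x, 𝒳*)`, which is positive because `x` is not a minimizer, gives
`dist(x, 𝒳*) ≥ 2μ/ρ`.
-/

theorem le_mul_infDist_sq {α : Type*} [PseudoMetricSpace α] {s : Set α} (hs : s.Nonempty)
    {x : α} {a c : ℝ} (hc : 0 < c) (h : ∀ z ∈ s, a ≤ c * dist x z ^ 2) :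
    a ≤ c * Metric.infDist x s ^ 2 := by
  have hroot : √(a / c) ≤ Metric.infDist x s :=
    (Metric.le_infDist hs).2 fun z hz =>
      (Real.sqrt_le_left dist_nonneg).2 ((div_le_iff₀' hc).2 (h z hz))
  rw [← div_le_iff₀' hc]
  exact (Real.sqrt_le_left Metric.infDist_nonneg).1 hroot

theorem no_stationary_points_in_tube_general
    {d : ℕ}
    (g : EuclideanSpace ℝ (Fin d) → ℝ) (μ ρ : ℝ) (hρ : 0 < ρ)
    (X Xstar : Set (EuclideanSpace ℝ (Fin d)))
    (hXstar : Xstar = {x | x ∈ X ∧ ∀ y ∈ X, g x ≤ g y})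
    (hXstarNe : Xstar.Nonempty)
    -- `gstar` is the minimal value of `g` over `X`
    (gstar : ℝ) (hgstar : ∀ z ∈ Xstar, g z = gstar)
    -- sharpness
    (hsharp : ∀ x ∈ X, μ * Metric.infDist x Xstar ≤ g x - gstar)
    -- `x` is stationary: `0` is a weak subgradient of `g + δ_X` at `x`
    (x : EuclideanSpace ℝ (Fin d)) (hxX : x ∈ X)
    (hstat : ∀ y ∈ X, g x - ρ / 2 * ‖y - x‖ ^ 2 ≤ g y)
    (hxnot : x ∉ Xstar) :
    2 * μ / ρ ≤ Metric.infDist x Xstar := by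
  have hmem : ∀ {z}, z ∈ Xstar ↔ z ∈ X ∧ ∀ y ∈ X, g z ≤ g y := hXstar ▸ Iff.rfl
  have hgap : g x - gstar ≤ ρ / 2 * Metric.infDist x Xstar ^ 2 :=
    le_mul_infDist_sq hXstarNe (half_pos hρ) fun z hz => by
      rw [dist_comm, dist_eq_norm]
      linarith [hstat z (hmem.1 hz).1, hgstar z hz]
  have hD : 0 < Metric.infDist x Xstar := by
    refine Metric.infDist_nonneg.lt_of_ne fun hD0 => hxnot (hmem.2 ⟨hxX, fun y hy => ?_⟩)
    obtain ⟨z, hz⟩ := hXstarNe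
    rw [← hD0] at hgap
    linarith [hgstar z hz, (hmem.1 hz).2 y hy]
  rw [div_le_iff₀ hρ]
  nlinarith [hsharp x hxX]

/-- **No stationary points in the tube.**
If `g` is `ρ`-weakly convex and `μ`-sharp on `X` with nonempty solution set `Xstar`,
then any point `x ∈ X` that is stationary for `min_X g` (i.e. `0` is a weak subgradient
of `g + δ_X` at `x`) and does not lie in `Xstar` satisfies `dist(x, Xstar) ≥ 2μ/ρ`. -/
theorem no_stationary_points_in_tube
    {d : ℕ} (hd : 1 ≤ d)
    (g : EuclideanSpace ℝ (Fin d) → ℝ) (μ ρ : ℝ) (hμ : 0 < μ) (hρ : 0 < ρ)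
    (X Xstar : Set (EuclideanSpace ℝ (Fin d)))
    (hXne : X.Nonempty) (hXcl : IsClosed X) (hXcv : Convex ℝ X)
    (hXstar : Xstar = {x | x ∈ X ∧ ∀ y ∈ X, g x ≤ g y})
    (hXstarNe : Xstar.Nonempty)
    -- `g` is `ρ`-weakly convex
    (hweak : ConvexOn ℝ Set.univ (fun x => g x + ρ / 2 * ‖x‖ ^ 2))
    -- `gstar` is the minimal value of `g` over `X`
    (gstar : ℝ) (hgstar : ∀ z ∈ Xstar, g z = gstar)
    -- sharpness
    (hsharp : ∀ x ∈ X, μ * Metric.infDist x Xstar ≤ g x - gstar)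
    -- `x` is stationary: `0` is a weak subgradient of `g + δ_X` at `x`
    (x : EuclideanSpace ℝ (Fin d)) (hxX : x ∈ X)
    (hstat : ∀ y ∈ X, g x - ρ / 2 * ‖y - x‖ ^ 2 ≤ g y)
    (hxnot : x ∉ Xstar) :
    2 * μ / ρ ≤ Metric.infDist x Xstar :=
  no_stationary_points_in_tube_general g μ ρ hρ X Xstar hXstar hXstarNe gstar hgstar hsharp x hxX
    hstat hxnot
end

section
/- (Linear convergence of the Polyak subgradient method.) Suppose g is μ-sharp on 𝒳 with 𝒳* nonempty, fix γ ∈ (0,1) and L with 0 < μ ≤ L, and suppose every weak subgradient of g at every point of the tube 𝒯₁ has norm at most L. Let x : ℕ → ℝ^d and ζ : ℕ → ℝ^d be sequences such that x₀ ∈ 𝒯_γ, for every k the vector ζ_k is a weak subgradient of g at x_k, and x_{k+1} = proj_𝒳( x_k − ((g(x_k) − g*)/‖ζ_k‖²)·ζ_k ), with the convention that x_{k+1} = x_k when ζ_k = 0. Then for every k ≥ 0, dist²(x_{k+1}, 𝒳*) ≤ (1 − (1 − γ)(μ/L)²)·dist²(x_k, 𝒳*); in particular every iterate x_k lies in 𝒯_γ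 and the iterates converge Q-linearly to 𝒳*. -/
/-!
Let `D = dist(x, 𝒳*)`, `Δ = g x - g*`, and let `z` be a point of the closure of `𝒳*` with
`‖x - z‖ = D`. The weak subgradient inequality towards `z` gives `Δ - ρD²/2 ≤ ⟪ζ, x - z⟫`,
and projecting onto the convex set `𝒳 ∋ z` does not increase the distance to `z`, so the
Polyak step with length `Δ/‖ζ‖²` yields `dist(x⁺, 𝒳*)² ≤ D² - (Δ - ρD²)Δ/‖ζ‖²`.
In the tube `ρD ≤ γμ`, so `ρD² ≤ γΔ` by sharpness, and `Δ ≥ μD`, `‖ζ‖ ≤ L` turn this into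
the factor `1 - (1-γ)(μ/L)²`. If `ζ = 0` the same inequality forces `D = 0`. As the factor is
at most `1`, the iterates never leave the tube.
-/

open scoped InnerProductSpace

open Metric

lemma sq_sub_polyak_decrease_le {μ ρ γ L D Δ s : ℝ} (hμ : 0 < μ) (hγ0 : 0 ≤ γ) (hγ1 : γ ≤ 1)
    (hD : 0 ≤ D) (hs : 0 ≤ s) (hsL : s ≤ L) (hsharp : μ * D ≤ Δ) (htube : ρ * D ≤ γ * μ)
    (hsub : Δ - ρ / 2 * D ^ 2 ≤ s * D) :
    D ^ 2 - (Δ - ρ * D ^ 2) * (Δ / s ^ 2) ≤ (1 - (1 - γ) * (μ / L) ^ 2) * D ^ 2 := by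
  have hΔ : 0 ≤ Δ := (mul_nonneg hμ.le hD).trans hsharp
  have hρD : ρ * D ^ 2 ≤ γ * Δ := by nlinarith [mul_le_mul_of_nonneg_right htube hD]
  have hγΔ : γ * Δ ≤ Δ := mul_le_of_le_one_left hΔ hγ1
  rcases hs.eq_or_lt with rfl | hs
  · have hD0 : μ * D = 0 := le_antisymm (by linarith) (mul_nonneg hμ.le hD)
    simp [(mul_eq_zero.1 hD0).resolve_left hμ.ne']
  · have hL : 0 < L := hs.trans_le hsL
    have hdecrease : (1 - γ) * (μ / L) ^ 2 * D ^ 2 ≤ (Δ - ρ * D ^ 2) * (Δ / s ^ 2) := by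
      calc (1 - γ) * (μ / L) ^ 2 * D ^ 2 = (1 - γ) * (μ * D) ^ 2 / L ^ 2 := by ring
        _ ≤ (1 - γ) * Δ ^ 2 / s ^ 2 := by gcongr
        _ = (1 - γ) * Δ * (Δ / s ^ 2) := by ring
        _ ≤ (Δ - ρ * D ^ 2) * (Δ / s ^ 2) := by
          gcongr
          linarith
    linarith

section InnerProductSpace

variable {E : Type*} [NormedAddCommGroup E] [InnerProductSpace ℝ E]

def IsWeakSubgradient (ρ : ℝ) (g : E → ℝ) (x v : E) : Prop :=
  ∀ y, g x + ⟪v, y - x⟫_ℝ - ρ / 2 * ‖y - x‖ ^ 2 ≤ g y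

lemma IsWeakSubgradient.sub_le_inner_of_mem_closure {ρ c : ℝ} {g : E → ℝ} {x v z : E}
    {S : Set E} (hv : IsWeakSubgradient ρ g x v) (hgS : ∀ y ∈ S, g y = c)
    (hz : z ∈ closure S) : g x - c - ρ / 2 * ‖x - z‖ ^ 2 ≤ ⟪v, x - z⟫_ℝ := by
  have hS : S ⊆ {y | g x - c - ρ / 2 * ‖x - y‖ ^ 2 ≤ ⟪v, x - y⟫_ℝ} := fun y hy => by
    have h := hv y
    rw [hgS y hy, ← neg_sub x y, inner_neg_right, norm_neg] at h
    simp only [Set.mem_ofPred_eq]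
    linarith
  exact closure_minimal hS (isClosed_le (by fun_prop) (by fun_prop)) hz

lemma norm_sub_le_of_forall_dist_le {K : Set E} (hK : Convex ℝ K) {p q z : E} (hq : q ∈ K)
    (hmin : ∀ y ∈ K, dist p q ≤ dist p y) (hz : z ∈ K) : ‖q - z‖ ≤ ‖p - z‖ := by
  have hinf : ‖p - q‖ = ⨅ w : K, ‖p - w‖ := by
    have : Nonempty K := ⟨⟨q, hq⟩⟩
    refine le_antisymm (le_ciInf fun w => ?_)
      (ciInf_le (f := fun w : K => ‖p - w‖) ⟨0, ?_⟩ ⟨q, hq⟩)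
    · simpa only [dist_eq_norm] using hmin w w.2
    · rintro _ ⟨w, rfl⟩; exact norm_nonneg _
  have hobtuse : ⟪p - q, z - q⟫_ℝ ≤ 0 := (norm_eq_iInf_iff_real_inner_le_zero hK hq).1 hinf z hz
  have hsq : ‖q - z‖ ^ 2 ≤ ‖p - z‖ ^ 2 := by
    rw [← sub_add_sub_cancel p q z, norm_add_sq_real, ← neg_sub z q, inner_neg_right]
    nlinarith [sq_nonneg ‖p - q‖]
  exact pow_le_pow_iff_left₀ (norm_nonneg _) (norm_nonneg _) two_ne_zero |>.1 hsq

lemma norm_polyak_step_sub_sq_le {ρ Δ : ℝ} {x v z : E} (hΔ : 0 ≤ Δ)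
    (hinner : Δ - ρ / 2 * ‖x - z‖ ^ 2 ≤ ⟪v, x - z⟫_ℝ) :
    ‖x - (Δ / ‖v‖ ^ 2) • v - z‖ ^ 2 ≤ ‖x - z‖ ^ 2 - (Δ - ρ * ‖x - z‖ ^ 2) * (Δ / ‖v‖ ^ 2) := by
  have hα : 0 ≤ Δ / ‖v‖ ^ 2 := by positivity
  have hαv : (Δ / ‖v‖ ^ 2) ^ 2 * ‖v‖ ^ 2 = Δ / ‖v‖ ^ 2 * Δ := by
    rcases eq_or_ne v 0 with rfl | hv0
    · simp
    · rw [sq (Δ / _), mul_assoc, div_mul_cancel₀ Δ (by positivity)]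
  rw [sub_right_comm, norm_sub_sq_real, real_inner_smul_right, norm_smul, mul_pow,
    Real.norm_eq_abs, sq_abs, real_inner_comm, hαv]
  nlinarith [mul_le_mul_of_nonneg_left hinner hα]

theorem infDist_sq_le_of_polyak_step [ProperSpace E] {g : E → ℝ} {S : Set E} {gstar μ ρ γ L : ℝ} {x v x' : E}
    (hμ : 0 < μ) (hγ0 : 0 ≤ γ) (hγ1 : γ ≤ 1) (hS : S.Nonempty) (hgS : ∀ z ∈ S, g z = gstar)
    (hsharp : μ * infDist x S ≤ g x - gstar) (htube : ρ * infDist x S ≤ γ * μ)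
    (hv : IsWeakSubgradient ρ g x v) (hvL : ‖v‖ ≤ L)
    (hx' : ∀ z ∈ closure S, ‖x' - z‖ ≤ ‖x - ((g x - gstar) / ‖v‖ ^ 2) • v - z‖) :
    infDist x' S ^ 2 ≤ (1 - (1 - γ) * (μ / L) ^ 2) * infDist x S ^ 2 := by
  obtain ⟨z, hzS, hxz⟩ := exists_mem_closure_infDist_eq_dist hS x
  rw [dist_eq_norm] at hxz
  have hsub := hv.sub_le_inner_of_mem_closure hgS hzS
  have hΔ : 0 ≤ g x - gstar := (mul_nonneg hμ.le infDist_nonneg).trans hsharp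
  calc infDist x' S ^ 2 ≤ ‖x' - z‖ ^ 2 := by
        gcongr
        · exact infDist_nonneg
        · rw [← infDist_closure, ← dist_eq_norm]; exact infDist_le_dist_of_mem hzS
    _ ≤ ‖x - ((g x - gstar) / ‖v‖ ^ 2) • v - z‖ ^ 2 := by gcongr; exact hx' z hzS
    _ ≤ ‖x - z‖ ^ 2 - (g x - gstar - ρ * ‖x - z‖ ^ 2) * ((g x - gstar) / ‖v‖ ^ 2) :=
        norm_polyak_step_sub_sq_le hΔ hsub
    _ ≤ (1 - (1 - γ) * (μ / L) ^ 2) * infDist x S ^ 2 := by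
        rw [← hxz] at hsub ⊢
        refine sq_sub_polyak_decrease_le hμ hγ0 hγ1 infDist_nonneg (norm_nonneg v) hvL hsharp
          htube (hsub.trans ?_)
        rw [hxz]; exact real_inner_le_norm v _

end InnerProductSpace

theorem polyak_subgradient_linear_rate_general
    {d : ℕ}
    (g : EuclideanSpace ℝ (Fin d) → ℝ) (μ ρ L γ : ℝ)
    (hμ : 0 < μ) (hρ : 0 < ρ) (hγ : γ ∈ Set.Ioo (0 : ℝ) 1)
    (X Xstar : Set (EuclideanSpace ℝ (Fin d)))
    (hXcl : IsClosed X) (hXcv : Convex ℝ X)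
    (hXstar : Xstar = {x | x ∈ X ∧ ∀ y ∈ X, g x ≤ g y})
    (hXstarNe : Xstar.Nonempty)
    -- `gstar` is the minimal value of `g` over `X`
    (gstar : ℝ) (hgstar : ∀ z ∈ Xstar, g z = gstar)
    -- sharpness
    (hsharp : ∀ x ∈ X, μ * Metric.infDist x Xstar ≤ g x - gstar)
    -- every weak subgradient at every point of the tube `𝒯₁` has norm at most `L`
    (hbound : ∀ x ∈ X, Metric.infDist x Xstar < μ / ρ →
      ∀ v : EuclideanSpace ℝ (Fin d),
        (∀ y, g x + ⟪v, y - x⟫_ℝ - ρ / 2 * ‖y - x‖ ^ 2 ≤ g y) → ‖v‖ ≤ L)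
    -- the iterate and subgradient sequences
    (x ζ : ℕ → EuclideanSpace ℝ (Fin d))
    -- initialization in the tube `𝒯_γ`
    (hx0 : x 0 ∈ X) (hx0tube : Metric.infDist (x 0) Xstar < γ * μ / ρ)
    -- `ζ k` is a weak subgradient of `g` at `x k`
    (hζ : ∀ k, ∀ y, g (x k) + ⟪ζ k, y - x k⟫_ℝ - ρ / 2 * ‖y - x k‖ ^ 2 ≤ g y)
    -- Polyak update: projection onto `X` of the Polyak subgradient step
    (hupdate : ∀ k, ζ k ≠ 0 →
      x (k + 1) ∈ X ∧
      ∀ y ∈ X, dist (x k - ((g (x k) - gstar) / ‖ζ k‖ ^ 2) • ζ k) (x (k + 1)) ≤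
        dist (x k - ((g (x k) - gstar) / ‖ζ k‖ ^ 2) • ζ k) y)
    (hstop : ∀ k, ζ k = 0 → x (k + 1) = x k) :
    ∀ k : ℕ, Metric.infDist (x (k + 1)) Xstar ^ 2 ≤
      (1 - (1 - γ) * (μ / L) ^ 2) * Metric.infDist (x k) Xstar ^ 2 := by
  obtain ⟨hγ0, hγ1⟩ := hγ
  have hXstarX : closure Xstar ⊆ X :=
    hXcl.closure_subset_iff.2 fun z hz => (hXstar ▸ hz : z ∈ {x | x ∈ X ∧ _}).1
  have hcloser (k : ℕ) (hk : x k ∈ X) : x (k + 1) ∈ X ∧ ∀ z ∈ X,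
      ‖x (k + 1) - z‖ ≤ ‖x k - ((g (x k) - gstar) / ‖ζ k‖ ^ 2) • ζ k - z‖ := by
    rcases eq_or_ne (ζ k) 0 with h0 | h0
    · -- the Polyak point is `x k` itself, as `0 / 0 = 0`
      simp [hstop k h0, h0, hk]
    · obtain ⟨hX, hmin⟩ := hupdate k h0
      exact ⟨hX, fun z hz => norm_sub_le_of_forall_dist_le hXcv hX hmin hz⟩
  have hstep (k : ℕ) (hk : x k ∈ X) (htube : infDist (x k) Xstar < γ * μ / ρ) :
      infDist (x (k + 1)) Xstar ^ 2 ≤ (1 - (1 - γ) * (μ / L) ^ 2) * infDist (x k) Xstar ^ 2 := by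
    have htube₁ : infDist (x k) Xstar < μ / ρ :=
      htube.trans_le (by gcongr; exact mul_le_of_le_one_left hμ.le hγ1.le)
    rw [lt_div_iff₀ hρ, mul_comm] at htube
    exact infDist_sq_le_of_polyak_step hμ hγ0.le hγ1.le hXstarNe hgstar (hsharp _ hk) htube.le
      (hζ k) (hbound _ hk htube₁ _ (hζ k)) fun z hz => (hcloser k hk).2 z (hXstarX hz)
  have hinv (k : ℕ) : x k ∈ X ∧ infDist (x k) Xstar < γ * μ / ρ := by
    induction k with
    | zero => exact ⟨hx0, hx0tube⟩
    | succ k ih =>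
      refine ⟨(hcloser k ih.1).1, lt_of_le_of_lt ?_ ih.2⟩
      refine (pow_le_pow_iff_left₀ infDist_nonneg infDist_nonneg two_ne_zero).1 ?_
      exact (hstep k ih.1 ih.2).trans <| mul_le_of_le_one_left (sq_nonneg _) <|
        sub_le_self _ (mul_nonneg (by linarith) (sq_nonneg _))
  exact fun k => hstep k (hinv k).1 (hinv k).2

/-- **Linear convergence of the Polyak subgradient method.**
If `g` is `μ`-sharp on `X` with nonempty solution set `Xstar`, `γ ∈ (0,1)`,
`0 < μ ≤ L`, every weak subgradient at every point of the tube `𝒯₁` has norm at most `L`,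
the initial point lies in the tube `𝒯_γ`, and the iterates follow the Polyak subgradient
update, then `dist²(x_{k+1}, Xstar) ≤ (1 - (1-γ)(μ/L)²)·dist²(x_k, Xstar)` for all `k`. -/
theorem polyak_subgradient_linear_rate
    {d : ℕ} (hd : 1 ≤ d)
    (g : EuclideanSpace ℝ (Fin d) → ℝ) (μ ρ L γ : ℝ)
    (hμ : 0 < μ) (hρ : 0 < ρ) (hμL : μ ≤ L) (hγ : γ ∈ Set.Ioo (0 : ℝ) 1)
    (X Xstar : Set (EuclideanSpace ℝ (Fin d)))
    (hXne : X.Nonempty) (hXcl : IsClosed X) (hXcv : Convex ℝ X)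
    (hXstar : Xstar = {x | x ∈ X ∧ ∀ y ∈ X, g x ≤ g y})
    (hXstarNe : Xstar.Nonempty)
    -- `gstar` is the minimal value of `g` over `X`
    (gstar : ℝ) (hgstar : ∀ z ∈ Xstar, g z = gstar)
    -- sharpness
    (hsharp : ∀ x ∈ X, μ * Metric.infDist x Xstar ≤ g x - gstar)
    -- every weak subgradient at every point of the tube `𝒯₁` has norm at most `L`
    (hbound : ∀ x ∈ X, Metric.infDist x Xstar < μ / ρ →
      ∀ v : EuclideanSpace ℝ (Fin d),
        (∀ y, g x + ⟪v, y - x⟫_ℝ - ρ / 2 * ‖y - x‖ ^ 2 ≤ g y) → ‖v‖ ≤ L)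
    -- the iterate and subgradient sequences
    (x ζ : ℕ → EuclideanSpace ℝ (Fin d))
    -- initialization in the tube `𝒯_γ`
    (hx0 : x 0 ∈ X) (hx0tube : Metric.infDist (x 0) Xstar < γ * μ / ρ)
    -- `ζ k` is a weak subgradient of `g` at `x k`
    (hζ : ∀ k, ∀ y, g (x k) + ⟪ζ k, y - x k⟫_ℝ - ρ / 2 * ‖y - x k‖ ^ 2 ≤ g y)
    -- Polyak update: projection onto `X` of the Polyak subgradient step
    (hupdate : ∀ k, ζ k ≠ 0 →
      x (k + 1) ∈ X ∧
      ∀ y ∈ X, dist (x k - ((g (x k) - gstar) / ‖ζ k‖ ^ 2) • ζ k) (x (k + 1)) ≤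
        dist (x k - ((g (x k) - gstar) / ‖ζ k‖ ^ 2) • ζ k) y)
    (hstop : ∀ k, ζ k = 0 → x (k + 1) = x k) :
    ∀ k : ℕ, Metric.infDist (x (k + 1)) Xstar ^ 2 ≤
      (1 - (1 - γ) * (μ / L) ^ 2) * Metric.infDist (x k) Xstar ^ 2 :=
  polyak_subgradient_linear_rate_general g μ ρ L γ hμ hρ hγ X Xstar hXcl hXcv hXstar hXstarNe gstar
    hgstar hsharp hbound x ζ hx0 hx0tube hζ hupdate hstop
end

section
/- (Bounds on the constants in the fixed-stepsize analysis.) Let μ, ρ, L be positive reals with μ ≤ L, set τ = μ/L, fix γ ∈ (0,1), fix α with 0 < α < (γτ/√(1 + 2τ²))·(μ/ρ), and let E₀ ≥ 0 satisfy E₀ ≤ (γμ/ρ)². Define E* = ( αL/(μ + √(μ² − αρL)) )², D = √( max{E₀, 2α² + E*} ), and q = 1 + (α/L)·(ρ − μ/D). Then E* is well defined (μ² − αρL > 0), D ≤ γμ/ρ, and q ∈ (0,1). -/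
/-!
Since `L·√(1 + 2τ²) = √(L² + 2μ²)`, the stepsize condition reads `αρ√(L² + 2μ²) < γμ²`.
As `L ≤ √(L² + 2μ²)` this gives `αρL < γμ² < μ²`. The denominator of `E*` is at least `μ`,
so `2α² + E* ≤ α²(L² + 2μ²)/μ²`, which the squared stepsize condition bounds by `(γμ/ρ)²`;
hence `D ≤ γμ/ρ`, i.e. `ρD ≤ γμ < μ`, which is `q < 1`. Finally `D² ≥ 2α²` gives `α < D`,
so `(α/L)(μ/D) < 1` and `q > 0`.
-/

open Real

lemma mul_sqrt_one_add_two_mul_div_sq {L : ℝ} (hL : 0 < L) (μ : ℝ) :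
    L * √(1 + 2 * (μ / L) ^ 2) = √(L ^ 2 + 2 * μ ^ 2) := by
  rw [← sqrt_sq hL.le, ← sqrt_mul (sq_nonneg L), sqrt_sq hL.le]
  congr 1
  field_simp

lemma mul_sqrt_lt_of_lt_stepsize_bound {μ ρ L γ α : ℝ} (hρ : 0 < ρ) (hL : 0 < L)
    (hα : α < (γ * (μ / L) / √(1 + 2 * (μ / L) ^ 2)) * (μ / ρ)) :
    α * ρ * √(L ^ 2 + 2 * μ ^ 2) < γ * μ ^ 2 := by
  set s := √(1 + 2 * (μ / L) ^ 2)
  have hs : 0 < s := sqrt_pos.mpr (by positivity)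
  rw [← mul_sqrt_one_add_two_mul_div_sq hL μ]
  have hα_eq : γ * (μ / L) / s * (μ / ρ) = γ * μ ^ 2 / (ρ * (L * s)) := by field_simp
  rw [hα_eq, lt_div_iff₀ (by positivity)] at hα
  linarith

lemma div_add_sqrt_sq_le {μ : ℝ} (hμ : 0 < μ) (a x : ℝ) :
    (a / (μ + √x)) ^ 2 ≤ (a / μ) ^ 2 := by
  rw [div_pow, div_pow]
  gcongr
  exact le_add_of_nonneg_right (sqrt_nonneg x)

lemma two_mul_sq_add_div_sq_lt {μ ρ L γ α : ℝ} (hμ : 0 < μ) (hρ : 0 < ρ) (hα : 0 ≤ α)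
    (h : α * ρ * √(L ^ 2 + 2 * μ ^ 2) < γ * μ ^ 2) :
    2 * α ^ 2 + (α * L / μ) ^ 2 < (γ * μ / ρ) ^ 2 := by
  have hsq : (α * ρ) ^ 2 * (L ^ 2 + 2 * μ ^ 2) < (γ * μ ^ 2) ^ 2 := by
    have h₀ : 0 ≤ α * ρ * √(L ^ 2 + 2 * μ ^ 2) := by positivity
    calc (α * ρ) ^ 2 * (L ^ 2 + 2 * μ ^ 2) = (α * ρ * √(L ^ 2 + 2 * μ ^ 2)) ^ 2 := by
          rw [mul_pow _ (√_), sq_sqrt (by positivity)]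
      _ < (γ * μ ^ 2) ^ 2 := pow_lt_pow_left₀ h h₀ two_ne_zero
  calc 2 * α ^ 2 + (α * L / μ) ^ 2 = (α * ρ) ^ 2 * (L ^ 2 + 2 * μ ^ 2) / (μ * ρ) ^ 2 := by
        field_simp
        ring
    _ < (γ * μ ^ 2) ^ 2 / (μ * ρ) ^ 2 := by gcongr
    _ = (γ * μ / ρ) ^ 2 := by field_simp

lemma one_add_mul_sub_div_lt_one {α L ρ μ D : ℝ} (hα : 0 < α) (hL : 0 < L) (hD : 0 < D)
    (hρD : ρ * D < μ) : 1 + α / L * (ρ - μ / D) < 1 := by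
  have : ρ < μ / D := (lt_div_iff₀ hD).mpr hρD
  have : α / L * (ρ - μ / D) < 0 := mul_neg_of_pos_of_neg (by positivity) (by linarith)
  linarith

lemma one_add_mul_sub_div_pos {α L ρ μ D : ℝ} (hα : 0 < α) (hρ : 0 ≤ ρ)
    (hL : 0 < L) (hμL : μ ≤ L) (hαD : α < D) : 0 < 1 + α / L * (ρ - μ / D) := by
  have hD : 0 < D := hα.trans hαD
  have hlt : α / L * (μ / D) < 1 := by
    rw [div_mul_div_comm, div_lt_one (by positivity)]
    nlinarith
  have : 0 ≤ α / L * ρ := by positivity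
  linarith

theorem fixed_stepsize_constants_bounds_general
    (μ ρ L γ α E₀ : ℝ)
    (hμ : 0 < μ) (hρ : 0 < ρ) (hL : 0 < L) (hμL : μ ≤ L)
    (hγ : γ ∈ Set.Ioo (0 : ℝ) 1)
    (hα : 0 < α)
    (hα' : α < (γ * (μ / L) / Real.sqrt (1 + 2 * (μ / L) ^ 2)) * (μ / ρ))
    (hE₀' : E₀ ≤ (γ * μ / ρ) ^ 2)
    (Estar : ℝ) (hEstar : Estar = (α * L / (μ + Real.sqrt (μ ^ 2 - α * ρ * L))) ^ 2)
    (D : ℝ) (hD : D = Real.sqrt (max E₀ (2 * α ^ 2 + Estar)))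
    (q : ℝ) (hq : q = 1 + (α / L) * (ρ - μ / D)) :
    0 < μ ^ 2 - α * ρ * L ∧ D ≤ γ * μ / ρ ∧ 0 < q ∧ q < 1 := by
  obtain ⟨hγ0, hγ1⟩ := hγ
  have hcond := mul_sqrt_lt_of_lt_stepsize_bound hρ hL hα'
  have hgap : α * ρ * L < μ ^ 2 := calc
    α * ρ * L ≤ α * ρ * √(L ^ 2 + 2 * μ ^ 2) := by
      gcongr
      exact le_sqrt_of_sq_le (le_add_of_nonneg_right (by positivity))
    _ < γ * μ ^ 2 := hcond
    _ ≤ μ ^ 2 := mul_le_of_le_one_left (by positivity) hγ1.le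
  have hEstar_le : Estar ≤ (α * L / μ) ^ 2 := hEstar ▸ div_add_sqrt_sq_le hμ _ _
  have hbound := two_mul_sq_add_div_sq_lt hμ hρ hα.le hcond
  have hDle : D ≤ γ * μ / ρ :=
    hD ▸ sqrt_le_iff.mpr ⟨by positivity, max_le hE₀' (by linarith)⟩
  have hαD : α < D := by
    have : 0 ≤ Estar := hEstar ▸ sq_nonneg _
    exact hD ▸ (lt_sqrt hα.le).mpr (lt_max_of_lt_right (by linarith [pow_pos hα 2]))
  have hρD : ρ * D < μ := calc
    ρ * D ≤ ρ * (γ * μ / ρ) := by gcongr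
    _ = γ * μ := by field_simp
    _ < μ := mul_lt_of_lt_one_left hμ hγ1
  refine ⟨sub_pos.mpr hgap, hDle, ?_, ?_⟩ <;> rw [hq]
  · exact one_add_mul_sub_div_pos hα hρ.le hL hμL hαD
  · exact one_add_mul_sub_div_lt_one hα hL (hα.trans hαD) hρD

/-- **Bounds on the constants in the fixed-stepsize analysis.**
Let `0 < μ ≤ L`, `ρ > 0`, `τ = μ/L`, `γ ∈ (0,1)`, `0 < α < (γτ/√(1 + 2τ²))·(μ/ρ)`, and
`0 ≤ E₀ ≤ (γμ/ρ)²`. With `E* = (αL/(μ + √(μ² - αρL)))²`, `D = √(max{E₀, 2α² + E*})` and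
`q = 1 + (α/L)(ρ - μ/D)`, we have `μ² - αρL > 0`, `D ≤ γμ/ρ`, and `q ∈ (0,1)`. -/
theorem fixed_stepsize_constants_bounds
    (μ ρ L γ α E₀ : ℝ)
    (hμ : 0 < μ) (hρ : 0 < ρ) (hL : 0 < L) (hμL : μ ≤ L)
    (hγ : γ ∈ Set.Ioo (0 : ℝ) 1)
    (hα : 0 < α)
    (hα' : α < (γ * (μ / L) / Real.sqrt (1 + 2 * (μ / L) ^ 2)) * (μ / ρ))
    (hE₀ : 0 ≤ E₀) (hE₀' : E₀ ≤ (γ * μ / ρ) ^ 2)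
    (Estar : ℝ) (hEstar : Estar = (α * L / (μ + Real.sqrt (μ ^ 2 - α * ρ * L))) ^ 2)
    (D : ℝ) (hD : D = Real.sqrt (max E₀ (2 * α ^ 2 + Estar)))
    (q : ℝ) (hq : q = 1 + (α / L) * (ρ - μ / D)) :
    0 < μ ^ 2 - α * ρ * L ∧ D ≤ γ * μ / ρ ∧ 0 < q ∧ q < 1 :=
  fixed_stepsize_constants_bounds_general μ ρ L γ α E₀ hμ hρ hL hμL hγ hα hα' hE₀' Estar hEstar D hD
    q hq
end

section
/- (Induction step for the geometrically decaying stepsize.) Suppose g is μ-sharp on 𝒳 with 𝒳* nonempty, fix L with 0 < μ ≤ L, set τ = μ/L, fix γ ∈ (0,1) with τ ≤ √(1/(2 − γ)), and set λ = γμ²/(ρL), q = √(1 − (1 − γ)τ²), and M = γμ/ρ. Let k ∈ ℕ, let x ∈ 𝒳 satisfy dist(x, 𝒳*) ≤ M·q^k, let ζ ≠ 0 be a weak subgradient of g at x with ‖ζ‖ ≤ L, and set x⁺ = proj_𝒳( x − λ·q^k·ζ/‖ζ‖ ). Then dist(x⁺, 𝒳*) ≤ M·q^{k+1}. -/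
open scoped InnerProductSpace

open Metric

/-!
Let `D = dist(x, Xstar)`, `t = q^k` and `α = λ t / ‖ζ‖`. For a minimizer `y`, projecting onto the
convex set `X` does not increase the distance to `y`, and the weak subgradient inequality at `y`
together with sharpness at `x` gives
`‖x⁺ - y‖² ≤ (1 + αρ)‖x - y‖² - 2αμD + (λt)²`.
Letting `‖x - y‖ → D` bounds `dist(x⁺, Xstar)²` by a quadratic in `D`. Because `D ≤ M t < 2μ/ρ`
this bound decreases in `α ≥ λt/L`, and at `α = λt/L` it is a convex quadratic in `D ∈ [0, M t]`,
whose endpoint values are at most `(M t q)²` precisely because `(2 - γ)τ² ≤ 1` and `t ≤ 1`.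
-/

theorem Metric.le_apply_infDist_of_forall_mem {α : Type*} [PseudoMetricSpace α] {s : Set α}
    (hs : s.Nonempty) {x : α} {φ : ℝ → ℝ} (hφ : ContinuousAt φ (infDist x s)) {a : ℝ}
    (h : ∀ y ∈ s, a ≤ φ (dist x y)) : a ≤ φ (infDist x s) := by
  by_contra! hlt
  obtain ⟨ε, hε, hball⟩ := Metric.eventually_nhds_iff.1 (hφ.eventually (gt_mem_nhds hlt))
  obtain ⟨y, hy, hyx⟩ := (infDist_lt_iff hs).1 (lt_add_of_pos_right (infDist x s) hε)
  have hclose : dist (dist x y) (infDist x s) < ε := by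
    rw [Real.dist_eq, abs_of_nonneg (sub_nonneg.2 (infDist_le_dist_of_mem hy))]
    linarith
  exact (h y hy).not_gt (hball hclose)

section InnerProductSpace

variable {E : Type*} [NormedAddCommGroup E] [InnerProductSpace ℝ E]

theorem Convex.dist_le_of_forall_dist_le {X : Set E} (hX : Convex ℝ X) {z p w : E} (hp : p ∈ X)
    (hmin : ∀ y ∈ X, dist z p ≤ dist z y) (hw : w ∈ X) : dist p w ≤ dist z w := by
  have : Nonempty X := ⟨⟨p, hp⟩⟩
  have hinf : ‖z - p‖ = ⨅ y : X, ‖z - y‖ :=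
    le_antisymm (le_ciInf fun y => by simpa only [dist_eq_norm] using hmin y y.2)
      (ciInf_le (f := fun y : X => ‖z - y‖) ⟨0, by rintro _ ⟨y, rfl⟩; exact norm_nonneg _⟩ ⟨p, hp⟩)
  have hobtuse : ⟪z - p, w - p⟫_ℝ ≤ 0 := (norm_eq_iInf_iff_real_inner_le_zero hX hp).1 hinf w hw
  have hexpand : ‖z - w‖ ^ 2 = ‖z - p‖ ^ 2 - 2 * ⟪z - p, w - p⟫_ℝ + ‖w - p‖ ^ 2 := by
    rw [← norm_sub_sq_real, sub_sub_sub_cancel_right]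
  rw [dist_eq_norm, dist_eq_norm, ← norm_neg, neg_sub]
  refine le_of_pow_le_pow_left₀ two_ne_zero (norm_nonneg _) ?_
  nlinarith [sq_nonneg ‖z - p‖]

theorem dist_sub_smul_sq_le_of_weak_subgradient {g : E → ℝ} {ρ α : ℝ} {x ζ y : E} (hα : 0 ≤ α)
    (hζ : g x + ⟪ζ, y - x⟫_ℝ - ρ / 2 * ‖y - x‖ ^ 2 ≤ g y) :
    dist (x - α • ζ) y ^ 2 ≤
      (1 + α * ρ) * dist x y ^ 2 - 2 * α * (g x - g y) + (α * ‖ζ‖) ^ 2 := by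
  have hexpand : dist (x - α • ζ) y ^ 2 = ‖y - x‖ ^ 2 + 2 * α * ⟪ζ, y - x⟫_ℝ + (α * ‖ζ‖) ^ 2 := by
    rw [dist_eq_norm, ← norm_neg, show -(x - α • ζ - y) = (y - x) + α • ζ by abel,
      norm_add_sq_real, real_inner_smul_right, real_inner_comm, norm_smul, Real.norm_of_nonneg hα]
    ring
  rw [hexpand, dist_comm, dist_eq_norm]
  nlinarith [mul_le_mul_of_nonneg_left hζ hα]

theorem infDist_sq_le_of_projected_subgradient_step {g : E → ℝ} {X S : Set E} (hX : Convex ℝ X)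
    (hS : S.Nonempty) (hSX : S ⊆ X) {x ζ p : E} {ρ μ α : ℝ} (hα : 0 ≤ α)
    (hζ : ∀ y, g x + ⟪ζ, y - x⟫_ℝ - ρ / 2 * ‖y - x‖ ^ 2 ≤ g y)
    (hsharp : ∀ y ∈ S, μ * infDist x S ≤ g x - g y) (hp : p ∈ X)
    (hmin : ∀ y ∈ X, dist (x - α • ζ) p ≤ dist (x - α • ζ) y) :
    infDist p S ^ 2 ≤
      (1 + α * ρ) * infDist x S ^ 2 - 2 * α * μ * infDist x S + (α * ‖ζ‖) ^ 2 := by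
  refine le_apply_infDist_of_forall_mem hS
    (φ := fun r => (1 + α * ρ) * r ^ 2 - 2 * α * μ * infDist x S + (α * ‖ζ‖) ^ 2) (by fun_prop)
    fun y hy => ?_
  calc infDist p S ^ 2 ≤ dist p y ^ 2 :=
        pow_le_pow_left₀ infDist_nonneg (infDist_le_dist_of_mem hy) 2
    _ ≤ dist (x - α • ζ) y ^ 2 :=
        pow_le_pow_left₀ dist_nonneg (hX.dist_le_of_forall_dist_le hp hmin (hSX hy)) 2
    _ ≤ (1 + α * ρ) * dist x y ^ 2 - 2 * α * (g x - g y) + (α * ‖ζ‖) ^ 2 :=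
        dist_sub_smul_sq_le_of_weak_subgradient hα (hζ y)
    _ ≤ (1 + α * ρ) * dist x y ^ 2 - 2 * α * μ * infDist x S + (α * ‖ζ‖) ^ 2 := by
        nlinarith [mul_le_mul_of_nonneg_left (hsharp y hy) hα]

end InnerProductSpace

theorem step_quadratic_le_of_le_mul {γ τ t M D : ℝ} (hγ : 0 ≤ γ) (hτ : (2 - γ) * τ ^ 2 ≤ 1)
    (ht0 : 0 ≤ t) (ht1 : t ≤ 1) (hD0 : 0 ≤ D) (hDM : D ≤ M * t) :
    (1 + γ * τ ^ 2 * t) * D ^ 2 - 2 * M * τ ^ 2 * t * D + M ^ 2 * τ ^ 2 * t ^ 2 ≤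
      (M * t) ^ 2 * (1 - (1 - γ) * τ ^ 2) := by
  have hB : 0 ≤ M * t := hD0.trans hDM
  have hsq : D ^ 2 ≤ M * t * D := by nlinarith
  have hchord : (1 + γ * τ ^ 2 * t) * D ^ 2 ≤ (1 + γ * τ ^ 2 * t) * (M * t * D) :=
    mul_le_mul_of_nonneg_left hsq (by positivity)
  have hright : 0 ≤ M * t * (1 - (2 - γ) * τ ^ 2) * (M * t - D) :=
    mul_nonneg (mul_nonneg hB (sub_nonneg.2 hτ)) (sub_nonneg.2 hDM)
  have hslack : 0 ≤ M * t * (γ * τ ^ 2 * (1 - t) * D) :=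
    mul_nonneg hB (mul_nonneg (mul_nonneg (mul_nonneg hγ (sq_nonneg τ)) (sub_nonneg.2 ht1)) hD0)
  linarith

theorem geometric_step_sq_le {μ ρ L γ lam M t D n : ℝ} (hμ : 0 < μ) (hρ : 0 < ρ) (hn : 0 < n)
    (hnL : n ≤ L) (hγ : γ ∈ Set.Ioo (0 : ℝ) 1) (hτ : (2 - γ) * (μ / L) ^ 2 ≤ 1)
    (hlam : lam = γ * μ ^ 2 / (ρ * L)) (hM : M = γ * μ / ρ) (ht0 : 0 ≤ t) (ht1 : t ≤ 1)
    (hD0 : 0 ≤ D) (hDM : D ≤ M * t) :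
    (1 + lam * t / n * ρ) * D ^ 2 - 2 * (lam * t / n) * μ * D + (lam * t) ^ 2 ≤
      (M * t) ^ 2 * (1 - (1 - γ) * (μ / L) ^ 2) := by
  obtain ⟨hγ0, hγ1⟩ := hγ
  have hL : 0 < L := hn.trans_le hnL
  have hlt : 0 ≤ lam * t := by rw [hlam]; positivity
  have hα : lam * t / L ≤ lam * t / n := div_le_div_of_nonneg_left hlt hn hnL
  have hρD : ρ * D ≤ 2 * μ := by
    have : ρ * (M * t) = γ * μ * t := by rw [hM]; field_simp
    nlinarith [mul_le_mul_of_nonneg_left hDM hρ.le, mul_le_mul_of_nonneg_left ht1 hγ0.le]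
  have hdecr : ρ * D ^ 2 - 2 * μ * D ≤ 0 := by nlinarith
  calc (1 + lam * t / n * ρ) * D ^ 2 - 2 * (lam * t / n) * μ * D + (lam * t) ^ 2
      = D ^ 2 + lam * t / n * (ρ * D ^ 2 - 2 * μ * D) + (lam * t) ^ 2 := by ring
    _ ≤ D ^ 2 + lam * t / L * (ρ * D ^ 2 - 2 * μ * D) + (lam * t) ^ 2 := by
        linarith [mul_le_mul_of_nonpos_right hα hdecr]
    _ = (1 + γ * (μ / L) ^ 2 * t) * D ^ 2 - 2 * M * (μ / L) ^ 2 * t * D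
          + M ^ 2 * (μ / L) ^ 2 * t ^ 2 := by
        rw [hlam, hM]; field_simp; ring
    _ ≤ (M * t) ^ 2 * (1 - (1 - γ) * (μ / L) ^ 2) :=
        step_quadratic_le_of_le_mul hγ0.le hτ ht0 ht1 hD0 hDM

theorem geometric_stepsize_induction_step_general
    {d : ℕ}
    (g : EuclideanSpace ℝ (Fin d) → ℝ) (μ ρ L γ : ℝ)
    (hμ : 0 < μ) (hρ : 0 < ρ) (hγ : γ ∈ Set.Ioo (0 : ℝ) 1)
    (hτ : μ / L ≤ Real.sqrt (1 / (2 - γ)))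
    (lam q M : ℝ)
    (hlam : lam = γ * μ ^ 2 / (ρ * L))
    (hq : q = Real.sqrt (1 - (1 - γ) * (μ / L) ^ 2))
    (hM : M = γ * μ / ρ)
    (X Xstar : Set (EuclideanSpace ℝ (Fin d)))
    (hXcv : Convex ℝ X)
    (hXstar : Xstar = {x | x ∈ X ∧ ∀ y ∈ X, g x ≤ g y})
    (hXstarNe : Xstar.Nonempty)
    -- `gstar` is the minimal value of `g` over `X`
    (gstar : ℝ) (hgstar : ∀ z ∈ Xstar, g z = gstar)
    -- sharpness
    (hsharp : ∀ x ∈ X, μ * Metric.infDist x Xstar ≤ g x - gstar)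
    (k : ℕ)
    (x : EuclideanSpace ℝ (Fin d)) (hxX : x ∈ X)
    (hxdist : Metric.infDist x Xstar ≤ M * q ^ k)
    -- `ζ ≠ 0` is a weak subgradient of `g` at `x` with `‖ζ‖ ≤ L`
    (ζ : EuclideanSpace ℝ (Fin d)) (hζ0 : ζ ≠ 0) (hζL : ‖ζ‖ ≤ L)
    (hζ : ∀ y, g x + ⟪ζ, y - x⟫_ℝ - ρ / 2 * ‖y - x‖ ^ 2 ≤ g y)
    -- `xp` is the projection onto `X` of `x - λ·q^k·ζ/‖ζ‖`
    (xp : EuclideanSpace ℝ (Fin d)) (hxpX : xp ∈ X)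
    (hxp : ∀ y ∈ X, dist (x - (lam * q ^ k / ‖ζ‖) • ζ) xp ≤
      dist (x - (lam * q ^ k / ‖ζ‖) • ζ) y) :
    Metric.infDist xp Xstar ≤ M * q ^ (k + 1) := by
  obtain ⟨hγ0, hγ1⟩ := hγ
  have hζpos : 0 < ‖ζ‖ := norm_pos_iff.2 hζ0
  have hL : 0 < L := hζpos.trans_le hζL
  have h2γ : 0 < 2 - γ := by linarith
  have hτsq : (2 - γ) * (μ / L) ^ 2 ≤ 1 := by
    rw [Real.le_sqrt (by positivity) (by positivity), le_div_iff₀ h2γ] at hτ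
    linarith
  have hq2 : q ^ 2 = 1 - (1 - γ) * (μ / L) ^ 2 := by
    rw [hq, Real.sq_sqrt (by nlinarith [sq_nonneg (μ / L)])]
  have hq0 : 0 ≤ q := hq ▸ Real.sqrt_nonneg _
  have hq1 : q ≤ 1 := by
    rw [hq, Real.sqrt_le_one]
    nlinarith [sq_nonneg (μ / L)]
  have hlam0 : 0 ≤ lam := by rw [hlam]; positivity
  have hstep := infDist_sq_le_of_projected_subgradient_step hXcv hXstarNe
    (fun y hy => (hXstar ▸ hy).1) (by positivity) hζ (fun y hy => hgstar y hy ▸ hsharp x hxX)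
    hxpX hxp
  rw [div_mul_cancel₀ _ hζpos.ne'] at hstep
  have hbound := geometric_step_sq_le hμ hρ hζpos hζL ⟨hγ0, hγ1⟩ hτsq hlam hM
    (pow_nonneg hq0 k) (pow_le_one₀ hq0 hq1) infDist_nonneg hxdist
  refine le_of_pow_le_pow_left₀ two_ne_zero (by rw [hM]; positivity) ?_
  calc infDist xp Xstar ^ 2 ≤ _ := hstep.trans hbound
    _ = (M * q ^ (k + 1)) ^ 2 := by rw [← hq2]; ring

/-- **Induction step for the geometrically decaying stepsize.**
If `g` is `μ`-sharp on `X` with nonempty solution set `Xstar`, `0 < μ ≤ L`, `τ = μ/L`,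
`γ ∈ (0,1)` with `τ ≤ √(1/(2-γ))`, `λ = γμ²/(ρL)`, `q = √(1 - (1-γ)τ²)`, `M = γμ/ρ`,
`x ∈ X` satisfies `dist(x, Xstar) ≤ M·q^k`, `ζ ≠ 0` is a weak subgradient of `g` at `x`
with `‖ζ‖ ≤ L`, and `x⁺ = proj_X(x - λ·q^k·ζ/‖ζ‖)`, then `dist(x⁺, Xstar) ≤ M·q^(k+1)`. -/
theorem geometric_stepsize_induction_step
    {d : ℕ} (hd : 1 ≤ d)
    (g : EuclideanSpace ℝ (Fin d) → ℝ) (μ ρ L γ : ℝ)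
    (hμ : 0 < μ) (hρ : 0 < ρ) (hμL : μ ≤ L) (hγ : γ ∈ Set.Ioo (0 : ℝ) 1)
    (hτ : μ / L ≤ Real.sqrt (1 / (2 - γ)))
    (lam q M : ℝ)
    (hlam : lam = γ * μ ^ 2 / (ρ * L))
    (hq : q = Real.sqrt (1 - (1 - γ) * (μ / L) ^ 2))
    (hM : M = γ * μ / ρ)
    (X Xstar : Set (EuclideanSpace ℝ (Fin d)))
    (hXne : X.Nonempty) (hXcl : IsClosed X) (hXcv : Convex ℝ X)
    (hXstar : Xstar = {x | x ∈ X ∧ ∀ y ∈ X, g x ≤ g y})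
    (hXstarNe : Xstar.Nonempty)
    -- `gstar` is the minimal value of `g` over `X`
    (gstar : ℝ) (hgstar : ∀ z ∈ Xstar, g z = gstar)
    -- sharpness
    (hsharp : ∀ x ∈ X, μ * Metric.infDist x Xstar ≤ g x - gstar)
    (k : ℕ)
    (x : EuclideanSpace ℝ (Fin d)) (hxX : x ∈ X)
    (hxdist : Metric.infDist x Xstar ≤ M * q ^ k)
    -- `ζ ≠ 0` is a weak subgradient of `g` at `x` with `‖ζ‖ ≤ L`
    (ζ : EuclideanSpace ℝ (Fin d)) (hζ0 : ζ ≠ 0) (hζL : ‖ζ‖ ≤ L)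
    (hζ : ∀ y, g x + ⟪ζ, y - x⟫_ℝ - ρ / 2 * ‖y - x‖ ^ 2 ≤ g y)
    -- `xp` is the projection onto `X` of `x - λ·q^k·ζ/‖ζ‖`
    (xp : EuclideanSpace ℝ (Fin d)) (hxpX : xp ∈ X)
    (hxp : ∀ y ∈ X, dist (x - (lam * q ^ k / ‖ζ‖) • ζ) xp ≤
      dist (x - (lam * q ^ k / ‖ζ‖) • ζ) y) :
    Metric.infDist xp Xstar ≤ M * q ^ (k + 1) :=
  geometric_stepsize_induction_step_general g μ ρ L γ hμ hρ hγ hτ lam q M hlam hq hM X Xstar hXcv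
    hXstar hXstarNe gstar hgstar hsharp k x hxX hxdist ζ hζ0 hζL hζ xp hxpX hxp
end

section
/- (Weak convexity of convex compositions of smooth maps.) Let h : ℝ^m → ℝ be convex and L-Lipschitz, and let c : ℝ^d → ℝ^m be differentiable with β-Lipschitz derivative, i.e. the map x ↦ Dc(x) is β-Lipschitz from ℝ^d to the space of linear maps ℝ^d → ℝ^m equipped with the operator norm. Then the composite function F(x) = h(c(x)) is (Lβ)-weakly convex; that is, the function x ↦ h(c(x)) + (Lβ/2)·‖x‖² is convex on ℝ^d. -/
/-!
At every point `z`, the linearization `x ↦ h (c z + c' z (x - z))` is convex (a convex function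
composed with an affine map), agrees with `h ∘ c` at `z`, and, because `h` is `L`-Lipschitz and
the Taylor remainder of `c` is at most `β/2 ‖x - z‖²`, exceeds `h ∘ c` by at most
`Lβ/2 ‖x - z‖²`. A function supported in this way by convex models at every point is
`(-Lβ)`-strongly convex, which in an inner product space is the convexity of
`h ∘ c + Lβ/2 ‖·‖²`.
-/

open Set

section Taylor

variable {E F : Type*} [NormedAddCommGroup E] [NormedSpace ℝ E]
  [NormedAddCommGroup F] [NormedSpace ℝ F]

theorem norm_image_sub_sub_fderiv_le {f : E → F} {f' : E → E →L[ℝ] F} {β : ℝ}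
    (hf : ∀ x, HasFDerivAt f (f' x) x) (hf' : ∀ x y, ‖f' x - f' y‖ ≤ β * ‖x - y‖) (a b : E) :
    ‖f b - f a - f' a (b - a)‖ ≤ β / 2 * ‖b - a‖ ^ 2 := by
  set v := b - a
  -- The remainder along the segment has derivative of norm `≤ β t ‖v‖²`, which integrates to `β/2`.
  set g : ℝ → F := fun t => f (a + t • v) - t • f' a v - f a
  have hg : ∀ t : ℝ, HasDerivAt g (f' (a + t • v) v - f' a v) t := by
    intro t
    have hline : HasDerivAt (fun t : ℝ => a + t • v) v t := by
      simpa using ((hasDerivAt_id t).smul_const v).const_add a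
    have hlin : HasDerivAt (fun t : ℝ => t • f' a v) (f' a v) t := by
      simpa using (hasDerivAt_id t).smul_const (f' a v)
    exact (((hf _).comp_hasDerivAt t hline).sub hlin).sub_const (f a)
  have hB : ∀ t : ℝ, HasDerivAt (fun t : ℝ => β * ‖v‖ ^ 2 * (t ^ 2 / 2)) (β * ‖v‖ ^ 2 * t) t := by
    intro t
    simpa using ((hasDerivAt_pow 2 t).div_const 2).const_mul (β * ‖v‖ ^ 2)
  have hg'_le : ∀ t ∈ Ico (0 : ℝ) 1, ‖f' (a + t • v) v - f' a v‖ ≤ β * ‖v‖ ^ 2 * t := by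
    intro t ht
    calc ‖f' (a + t • v) v - f' a v‖ ≤ ‖f' (a + t • v) - f' a‖ * ‖v‖ :=
          (f' (a + t • v) - f' a).le_opNorm v
      _ ≤ β * ‖(a + t • v) - a‖ * ‖v‖ := by gcongr; exact hf' _ _
      _ = β * ‖v‖ ^ 2 * t := by
          rw [add_sub_cancel_left, norm_smul, Real.norm_of_nonneg ht.1]; ring
  have key := image_norm_le_of_norm_deriv_right_le_deriv_boundary
    (fun t _ => (hg t).continuousAt.continuousWithinAt) (fun t _ => (hg t).hasDerivWithinAt)
    (by simp [g]) hB hg'_le (right_mem_Icc.2 zero_le_one)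
  have hg1 : g 1 = f b - f a - f' a (b - a) := by
    simp only [g, v, one_smul, add_sub_cancel]; abel
  rw [hg1] at key
  linarith

end Taylor

section ConvexModels

variable {E : Type*} [NormedAddCommGroup E] [NormedSpace ℝ E]

theorem strongConvexOn_neg_of_convex_models {F : E → ℝ} {ρ : ℝ} (φ : E → E → ℝ)
    (hφ : ∀ z, ConvexOn ℝ univ (φ z)) (hφ_self : ∀ z, φ z z = F z)
    (hφ_le : ∀ z x, φ z x ≤ F x + ρ / 2 * ‖x - z‖ ^ 2) :
    StrongConvexOn univ (-ρ) F := by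
  refine ⟨convex_univ, fun x _ y _ a b ha hb hab => ?_⟩
  obtain rfl : a = 1 - b := eq_sub_of_add_eq hab
  set z := (1 - b) • x + b • y
  have hxz : ‖x - z‖ = b * ‖x - y‖ := by
    rw [show x - z = b • (x - y) by module, norm_smul, Real.norm_of_nonneg hb]
  have hyz : ‖y - z‖ = (1 - b) * ‖x - y‖ := by
    rw [show y - z = (1 - b) • (y - x) by module, norm_smul, Real.norm_of_nonneg ha,
      norm_sub_rev]
  calc F z = φ z z := (hφ_self z).symm
    _ ≤ (1 - b) * φ z x + b * φ z y := (hφ z).2 (mem_univ x) (mem_univ y) ha hb hab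
    _ ≤ (1 - b) * (F x + ρ / 2 * ‖x - z‖ ^ 2) + b * (F y + ρ / 2 * ‖y - z‖ ^ 2) := by
        gcongr <;> apply hφ_le
    _ = (1 - b) • F x + b • F y - (1 - b) * b * (-ρ / 2 * ‖x - y‖ ^ 2) := by
        rw [hxz, hyz, smul_eq_mul, smul_eq_mul]; ring

end ConvexModels

section Linearization

variable {E G : Type*} [NormedAddCommGroup E] [NormedSpace ℝ E]
  [NormedAddCommGroup G] [NormedSpace ℝ G]

theorem ConvexOn.comp_linearization {h : G → ℝ} (hh : ConvexOn ℝ univ h) (c : E → G)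
    (c' : E → E →L[ℝ] G) (z : E) :
    ConvexOn ℝ univ (fun x => h (c z + c' z (x - z))) := by
  set A : E →ᵃ[ℝ] G := (c' z).toLinearMap.toAffineMap + AffineMap.const ℝ E (c z - c' z z)
  have hA : ∀ x, A x = c z + c' z (x - z) := fun x => by
    simp only [A, AffineMap.coe_add, LinearMap.coe_toAffineMap, ContinuousLinearMap.coe_coe,
      AffineMap.coe_const, Pi.add_apply, Function.const_apply, map_sub]
    abel
  simpa [Function.comp_def, hA] using hh.comp_affineMap A

theorem comp_linearization_le {h : G → ℝ} {L β : ℝ} (hL : 0 ≤ L)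
    (hlip : ∀ u v, |h u - h v| ≤ L * ‖u - v‖) {c : E → G} {c' : E → E →L[ℝ] G}
    (hc : ∀ x, HasFDerivAt c (c' x) x) (hc' : ∀ x y, ‖c' x - c' y‖ ≤ β * ‖x - y‖) (z x : E) :
    h (c z + c' z (x - z)) ≤ h (c x) + L * β / 2 * ‖x - z‖ ^ 2 :=
  calc h (c z + c' z (x - z)) ≤ h (c x) + L * ‖c z + c' z (x - z) - c x‖ := by
        linarith [(le_abs_self _).trans (hlip (c z + c' z (x - z)) (c x))]
    _ = h (c x) + L * ‖c x - c z - c' z (x - z)‖ := by rw [norm_sub_rev, sub_sub]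
    _ ≤ h (c x) + L * (β / 2 * ‖x - z‖ ^ 2) := by
        gcongr; exact norm_image_sub_sub_fderiv_le hc hc' z x
    _ = h (c x) + L * β / 2 * ‖x - z‖ ^ 2 := by ring

end Linearization

theorem composite_weakly_convex_general
    {d m : ℕ} (L β : ℝ) (hL : 0 < L)
    (h : EuclideanSpace ℝ (Fin m) → ℝ)
    (hconv : ConvexOn ℝ Set.univ h)
    (hlip : ∀ u v : EuclideanSpace ℝ (Fin m), |h u - h v| ≤ L * ‖u - v‖)
    (c : EuclideanSpace ℝ (Fin d) → EuclideanSpace ℝ (Fin m))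
    (c' : EuclideanSpace ℝ (Fin d) →
      (EuclideanSpace ℝ (Fin d) →L[ℝ] EuclideanSpace ℝ (Fin m)))
    (hc : ∀ x, HasFDerivAt c (c' x) x)
    (hc'lip : ∀ x y : EuclideanSpace ℝ (Fin d), ‖c' x - c' y‖ ≤ β * ‖x - y‖) :
    ConvexOn ℝ Set.univ (fun x => h (c x) + L * β / 2 * ‖x‖ ^ 2) := by
  have hstrong : StrongConvexOn univ (-(L * β)) (fun x => h (c x)) :=
    strongConvexOn_neg_of_convex_models (fun z x => h (c z + c' z (x - z)))
      (hconv.comp_linearization c c') (by simp)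
      (comp_linearization_le hL.le hlip hc hc'lip)
  simpa [strongConvexOn_iff_convex, neg_div] using hstrong

/-- **Weak convexity of convex compositions of smooth maps.**
If `h : ℝ^m → ℝ` is convex and `L`-Lipschitz and `c : ℝ^d → ℝ^m` is differentiable with
`β`-Lipschitz derivative, then `F = h ∘ c` is `(Lβ)`-weakly convex, i.e.
`x ↦ h(c(x)) + (Lβ/2)·‖x‖²` is convex on `ℝ^d`. -/
theorem composite_weakly_convex
    {d m : ℕ} (L β : ℝ) (hL : 0 < L) (hβ : 0 < β)
    (h : EuclideanSpace ℝ (Fin m) → ℝ)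
    (hconv : ConvexOn ℝ Set.univ h)
    (hlip : ∀ u v : EuclideanSpace ℝ (Fin m), |h u - h v| ≤ L * ‖u - v‖)
    (c : EuclideanSpace ℝ (Fin d) → EuclideanSpace ℝ (Fin m))
    (c' : EuclideanSpace ℝ (Fin d) →
      (EuclideanSpace ℝ (Fin d) →L[ℝ] EuclideanSpace ℝ (Fin m)))
    (hc : ∀ x, HasFDerivAt c (c' x) x)
    (hc'lip : ∀ x y : EuclideanSpace ℝ (Fin d), ‖c' x - c' y‖ ≤ β * ‖x - y‖) :
    ConvexOn ℝ Set.univ (fun x => h (c x) + L * β / 2 * ‖x‖ ^ 2) :=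
  composite_weakly_convex_general L β hL h hconv hlip c c' hc hc'lip
end

section
/- (Local subgradients of weakly convex functions are global weak subgradients.) Let g : ℝ^d → ℝ be ρ-weakly convex, i.e. x ↦ g(x) + (ρ/2)‖x‖² is convex on ℝ^d. Suppose x, v ∈ ℝ^d satisfy the local lower-approximation property g(y) ≥ g(x) + ⟨v, y − x⟩ + o(‖y − x‖) as y → x; formally, the function y ↦ max{0, g(x) + ⟨v, y − x⟩ − g(y)} is little-o of ‖y − x‖ as y → x. Then the global inequality g(y) ≥ g(x) + ⟨v, y − x⟩ − (ρ/2)‖y − x‖² holds for all y ∈ ℝ^d. -/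
/-!
The deficit `φ y = g x + ⟪v, y - x⟫ - g y - (ρ/2)‖y - x‖²` differs from the linearization
deficit of the convex function `g + (ρ/2)‖·‖²` (with slope `v + ρ x`) only by an affine term, so it
is concave; it vanishes at `x` and, since `ρ ≥ 0`, its positive part is still `o(‖y - x‖)`. A
concave function vanishing at `x` that is positive at some `y` grows at least linearly along the
segment from `x` to `y`, which the little-o bound forbids.
-/

open scoped InnerProductSpace Topology
open Set Filter Asymptotics

theorem ConcaveOn.nonpos_of_isLittleO {E : Type*} [NormedAddCommGroup E] [NormedSpace ℝ E]
    {s : Set E} {φ : E → ℝ} (hφ : ConcaveOn ℝ s φ) {x y : E} (hx : x ∈ s) (hy : y ∈ s)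
    (hφx : φ x = 0) (h : (fun z => max 0 (φ z)) =o[𝓝 x] (fun z => ‖z - x‖)) : φ y ≤ 0 := by
  by_contra! hφy
  set u := y - x
  have hchord : ∀ t ∈ Ioo (0 : ℝ) 1, t * φ y ≤ φ (x + t • u) := fun t ht => by
    have hseg : x + t • u = (1 - t) • x + t • y := by module
    simpa [hseg, hφx] using hφ.2 hx hy (sub_nonneg.2 ht.2.le) ht.1.le (sub_add_cancel 1 t)
  set ε := φ y / (‖u‖ + 1)
  have hε : 0 < ε := by positivity
  have hpath : Tendsto (fun t : ℝ => x + t • u) (𝓝[>] 0) (𝓝 x) := by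
    have hcont : Continuous fun t : ℝ => x + t • u := by fun_prop
    simpa using (hcont.tendsto 0).mono_left nhdsWithin_le_nhds
  obtain ⟨t, hsmall, ht⟩ :=
    ((hpath.eventually (h.def hε)).and (Ioo_mem_nhdsGT one_pos)).exists
  have hbound : t * φ y ≤ t * (ε * ‖u‖) := calc
    t * φ y ≤ φ (x + t • u) := hchord t ht
    _ ≤ max 0 (φ (x + t • u)) := le_max_right _ _
    _ ≤ ε * ‖x + t • u - x‖ := (Real.le_norm_self _).trans (by simpa only [norm_norm] using hsmall)
    _ = t * (ε * ‖u‖) := by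
      rw [add_sub_cancel_left, norm_smul, Real.norm_of_nonneg ht.1.le]; ring
  have hlt : ε * ‖u‖ < φ y := calc
    ε * ‖u‖ < ε * (‖u‖ + 1) := mul_lt_mul_of_pos_left (lt_add_one _) hε
    _ = φ y := div_mul_cancel₀ _ (by positivity)
  linarith [le_of_mul_le_mul_left hbound ht.1]

theorem concaveOn_weakConvex_deficit {E : Type*} [NormedAddCommGroup E] [InnerProductSpace ℝ E]
    {ρ : ℝ} {g : E → ℝ} (hweak : ConvexOn ℝ univ (fun x => g x + ρ / 2 * ‖x‖ ^ 2)) (x v : E) :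
    ConcaveOn ℝ univ (fun y => g x + ⟪v, y - x⟫_ℝ - g y - ρ / 2 * ‖y - x‖ ^ 2) := by
  refine ((((innerₛₗ ℝ (v + ρ • x)).concaveOn convex_univ).add_const
    (g x + ρ / 2 * ‖x‖ ^ 2 - ⟪v + ρ • x, x⟫_ℝ)).sub hweak).congr fun y _ => ?_
  simp only [Pi.add_apply, Pi.sub_apply, innerₛₗ_apply_apply, norm_sub_sq_real, inner_add_left,
    inner_sub_right, real_inner_smul_left, real_inner_self_eq_norm_sq, real_inner_comm x y]
  ring

theorem local_subgradient_is_global_weak_subgradient_general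
    {d : ℕ} (ρ : ℝ) (hρ : 0 < ρ)
    (g : EuclideanSpace ℝ (Fin d) → ℝ)
    -- `g` is `ρ`-weakly convex
    (hweak : ConvexOn ℝ Set.univ (fun x => g x + ρ / 2 * ‖x‖ ^ 2))
    (x v : EuclideanSpace ℝ (Fin d))
    -- local lower-approximation property, `o(‖y - x‖)` as `y → x`
    (hlocal : (fun y => max 0 (g x + ⟪v, y - x⟫_ℝ - g y))
      =o[nhds x] (fun y => ‖y - x‖)) :
    ∀ y, g x + ⟪v, y - x⟫_ℝ - ρ / 2 * ‖y - x‖ ^ 2 ≤ g y := by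
  intro y
  have hdeficit : (fun z => max 0 (g x + ⟪v, z - x⟫_ℝ - g z - ρ / 2 * ‖z - x‖ ^ 2))
      =o[𝓝 x] (fun z => ‖z - x‖) := by
    refine (isBigO_of_le _ fun z => ?_).trans_isLittleO hlocal
    rw [Real.norm_of_nonneg (le_max_left _ _), Real.norm_of_nonneg (le_max_left _ _)]
    exact max_le_max le_rfl (sub_le_self _ (by positivity))
  have := (concaveOn_weakConvex_deficit hweak x v).nonpos_of_isLittleO (mem_univ x) (mem_univ y)
    (by simp) hdeficit
  linarith

/-- **Local subgradients of weakly convex functions are global weak subgradients.**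
If `g : ℝ^d → ℝ` is `ρ`-weakly convex and `v` satisfies the local lower-approximation
property `g(y) ≥ g(x) + ⟨v, y - x⟩ + o(‖y - x‖)` as `y → x` (formally, the deficit
`y ↦ max{0, g(x) + ⟨v, y - x⟩ - g(y)}` is little-o of `‖y - x‖` at `x`), then the global
inequality `g(y) ≥ g(x) + ⟨v, y - x⟩ - (ρ/2)‖y - x‖²` holds for all `y`. -/
theorem local_subgradient_is_global_weak_subgradient
    {d : ℕ} (hd : 1 ≤ d) (ρ : ℝ) (hρ : 0 < ρ)
    (g : EuclideanSpace ℝ (Fin d) → ℝ)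
    -- `g` is `ρ`-weakly convex
    (hweak : ConvexOn ℝ Set.univ (fun x => g x + ρ / 2 * ‖x‖ ^ 2))
    (x v : EuclideanSpace ℝ (Fin d))
    -- local lower-approximation property, `o(‖y - x‖)` as `y → x`
    (hlocal : (fun y => max 0 (g x + ⟪v, y - x⟫_ℝ - g y))
      =o[nhds x] (fun y => ‖y - x‖)) :
    ∀ y, g x + ⟪v, y - x⟫_ℝ - ρ / 2 * ‖y - x‖ ^ 2 ≤ g y :=
  local_subgradient_is_global_weak_subgradient_general ρ hρ g hweak x v hlocal
end
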